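/- Consider the power command dynamics γ_{ij} ψ̇_{ij} = p_i^c − p_j^c for (i,j) ∈ Ẽ and γ_j ṗ_j^c = −(s_j − p_j^L) − Σ_{k:j→k} ψ_{jk} + Σ_{i:i→j} ψ_{ij} for j ∈ N, with γ_j, γ_{ij} > 0. Then along trajectories, the function V_C(p^c) + V_ψ(ψ) := ½ Σ_j γ_j(p_j^c − p_j^{c,*})² + ½ Σ_{(i,j)∈Ẽ} γ_{ij}(ψ_{ij} − ψ*_{ij})² satisfies d/dt (V_C + V_ψ) = Σ_{j∈N} (p_j^c − p_j^{c,*})(−s_j + s*_j), where (p^{c,*}, ψ*, s*) is any equilibrium of these dynamics. -/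

import Mathlib

/-!
Differentiating the energy, the weights `γ` cancel against the `1/γ` in the dynamics, leaving
`Σ_j (p_j^c - p_j^{c,*}) X_j + Σ_e (ψ_e - ψ_e^*)(p^c_{src e} - p^c_{tgt e})`, where `X_j` is the
right-hand side of the `p^c` dynamics. Subtracting the equilibrium relation turns `X_j` into
`s_j^* - s_j` plus the net inflow of `ψ - ψ^*` at `j`; since `p^{c,*}` is constant along edges, the
second sum pairs `ψ - ψ^*` with differences of `p^c - p^{c,*}` along edges. Summation by parts on
the graph (each edge is counted once at its source and once at its target) cancels the two.
-/

open Finset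

section GraphSums

variable {V E R : Type*} [Fintype V] [Fintype E] [DecidableEq V] [CommRing R]

def netInflow (src tgt : E → V) (y : E → R) (j : V) : R :=
  ∑ e ∈ univ.filter (fun e => tgt e = j), y e - ∑ e ∈ univ.filter (fun e => src e = j), y e

theorem sum_mul_sum_fiber (π : E → V) (x : V → R) (y : E → R) :
    ∑ j, x j * ∑ e ∈ univ.filter (fun e => π e = j), y e = ∑ e, x (π e) * y e := by
  rw [← sum_fiberwise univ π (fun e => x (π e) * y e)]
  refine sum_congr rfl fun j _ => ?_
  rw [mul_sum]
  exact sum_congr rfl fun e he => by rw [(mem_filter.mp he).2]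

theorem sum_mul_netInflow (src tgt : E → V) (x : V → R) (y : E → R) :
    ∑ j, x j * netInflow src tgt y j = ∑ e, y e * (x (tgt e) - x (src e)) := by
  simp only [netInflow, mul_sub, sum_sub_distrib, sum_mul_sum_fiber, sub_mul, mul_comm (y _)]

end GraphSums

theorem hasDerivAt_half_sum_weighted_sq {ι : Type*} [Fintype ι] (w : ι → ℝ) (hw : ∀ i, w i ≠ 0)
    (u : ι → ℝ → ℝ) (c d : ι → ℝ) (t : ℝ) (hu : ∀ i, HasDerivAt (u i) (d i / w i) t) :
    HasDerivAt (fun τ => (1/2) * ∑ i, w i * (u i τ - c i) ^ 2) (∑ i, (u i t - c i) * d i) t := by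
  have hsum := HasDerivAt.fun_sum (u := univ) fun i _ =>
    (((hu i).sub_const (c i)).fun_pow 2).const_mul (w i)
  refine (hsum.const_mul (1/2 : ℝ)).congr_deriv ?_
  rw [mul_sum]
  refine sum_congr rfl fun i _ => ?_
  field_simp [hw i]
  ring

theorem stmt_9 {V E : Type} [Fintype V] [Fintype E] [DecidableEq V]
    (src tgt : E → V)
    (γ : V → ℝ) (hγ : ∀ j, 0 < γ j) (γe : E → ℝ) (hγe : ∀ e, 0 < γe e)
    (pL : V → ℝ)
    (pc : V → ℝ → ℝ) (ψ : E → ℝ → ℝ) (s : V → ℝ → ℝ)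
    (pcstar : V → ℝ) (ψstar : E → ℝ) (sstar : V → ℝ) (t : ℝ)
    -- power command dynamics
    (hψ : ∀ e, HasDerivAt (ψ e) ((pc (src e) t - pc (tgt e) t) / γe e) t)
    (hpc : ∀ j, HasDerivAt (pc j)
      ((-(s j t - pL j)
        - (∑ e ∈ univ.filter (fun e => src e = j), ψ e t)
        + (∑ e ∈ univ.filter (fun e => tgt e = j), ψ e t)) / γ j) t)
    -- equilibrium relations
    (heq : ∀ j : V, (0 : ℝ) = -(sstar j - pL j)
        - (∑ e ∈ univ.filter (fun e => src e = j), ψstar e)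
        + (∑ e ∈ univ.filter (fun e => tgt e = j), ψstar e))
    (hpceq : ∀ e : E, pcstar (src e) = pcstar (tgt e)) :
    HasDerivAt (fun τ =>
        (1/2) * ∑ j, γ j * (pc j τ - pcstar j)^2
        + (1/2) * ∑ e, γe e * (ψ e τ - ψstar e)^2)
      (∑ j, (pc j t - pcstar j) * (-(s j t) + sstar j)) t := by
  have hbalance : ∀ j, -(s j t - pL j) - (∑ e ∈ univ.filter (fun e => src e = j), ψ e t)
      + (∑ e ∈ univ.filter (fun e => tgt e = j), ψ e t)
      = (-(s j t) + sstar j) + netInflow src tgt (fun e => ψ e t - ψstar e) j := by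
    intro j
    simp only [netInflow, sum_sub_distrib]
    linarith [heq j]
  have hedge : ∀ e, (ψ e t - ψstar e) * (pc (src e) t - pc (tgt e) t)
      = -((ψ e t - ψstar e)
          * ((pc (tgt e) t - pcstar (tgt e)) - (pc (src e) t - pcstar (src e)))) := by
    intro e
    linear_combination (ψ e t - ψstar e) * hpceq e
  refine ((hasDerivAt_half_sum_weighted_sq γ (fun j => (hγ j).ne') pc pcstar _ t hpc).add
    (hasDerivAt_half_sum_weighted_sq γe (fun e => (hγe e).ne') ψ ψstar _ t hψ)).congr_deriv ?_
  simp only [hbalance, hedge, mul_add, sum_add_distrib, sum_neg_distrib]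
  rw [sum_mul_netInflow src tgt (fun j => pc j t - pcstar j)]
  ring
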